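/- The functions ρ_0, …, ρ_K defined by the explicit recursion solve the Fokker–Planck system: for all t > 0, ρ_0'(t) = −q_0(t) ρ_0(t); ρ_k'(t) = q_{k−1}(t) ρ_{k−1}(t) − q_k(t) ρ_k(t) for every 0 < k < K; and ρ_K'(t) = q_{K−1}(t) ρ_{K−1}(t); moreover ρ_0(0) = 1 and ρ_k(0) = 0 for every k ≥ 1. -/

import Mathlib

open MeasureTheory

/-- The recursively defined probabilities `ρ_k` from the Fokker–Planck solution formula:
`ρ_0(t) = exp(-∫_0^t g_0)`, `ρ_{k+1}(t) = ∫_0^t ρ_k(s) g_k(s) exp(-∫_s^t g_{k+1}) ds`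
for `k+1 < K`, and `ρ_K(t) = ∫_0^t ρ_{K-1}(s) g_{K-1}(s) ds`. -/
noncomputable def rho (K : ℕ) (g : ℕ → ℝ → ℝ) : ℕ → ℝ → ℝ
  | 0 => fun t => Real.exp (-(∫ s in (0:ℝ)..t, g 0 s))
  | (k+1) => fun t =>
      if k + 1 = K then ∫ s in (0:ℝ)..t, rho K g k s * g k s
      else ∫ s in (0:ℝ)..t, rho K g k s * g k s * Real.exp (-(∫ u in s..t, g (k+1) u))

open intervalIntegral Real

/-!
`ρ_0` is the homogeneous solution `exp (-∫ q_0)`, `ρ_K` is a plain primitive, and each middle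
`ρ_{k+1}` is the variation-of-constants solution of `y' = f - a y` with `a = q_{k+1}` and source
`f = ρ_k q_k`. Writing `exp (-∫_s^t a) = exp (-∫_0^t a) · exp (∫_0^s a)` turns that integral into a
product of two differentiable functions, and the product rule gives `y' = f - a y`. Continuity
of each `ρ_k`, needed to differentiate the next one, follows from its differentiability.
-/

section VariationOfConstants

variable {a f : ℝ → ℝ}

theorem integral_mul_exp_neg_integral_eq (ha : Continuous a) (t₀ t : ℝ) :
    ∫ s in t₀..t, f s * exp (-∫ u in s..t, a u) =
      exp (-∫ u in t₀..t, a u) * ∫ s in t₀..t, f s * exp (∫ u in t₀..s, a u) := by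
  rw [← intervalIntegral.integral_const_mul]
  refine integral_congr fun s _ => ?_
  rw [← integral_interval_sub_left (ha.intervalIntegrable _ _) (ha.intervalIntegrable t₀ s),
    neg_sub, sub_eq_add_neg, exp_add]
  ring

theorem hasDerivAt_integral_mul_exp_neg_integral (ha : Continuous a) (hf : Continuous f)
    (t₀ t : ℝ) :
    HasDerivAt (fun t => ∫ s in t₀..t, f s * exp (-∫ u in s..t, a u))
      (f t - a t * ∫ s in t₀..t, f s * exp (-∫ u in s..t, a u)) t := by
  simp_rw [integral_mul_exp_neg_integral_eq ha t₀]
  have hA : HasDerivAt (fun t => ∫ u in t₀..t, a u) (a t) t :=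
    (ha.integral_hasStrictDerivAt t₀ t).hasDerivAt
  have hG : HasDerivAt (fun t => ∫ s in t₀..t, f s * exp (∫ u in t₀..s, a u))
      (f t * exp (∫ u in t₀..t, a u)) t :=
    ((hf.mul (continuous_primitive (fun _ _ => ha.intervalIntegrable _ _) t₀).rexp)
      |>.integral_hasStrictDerivAt t₀ t).hasDerivAt
  refine (hA.neg.exp.mul hG).congr_deriv ?_
  simp only [Pi.neg_apply, exp_neg]
  field_simp
  ring

theorem continuous_integral_mul_exp_neg_integral (ha : Continuous a) (hf : Continuous f)
    (t₀ : ℝ) : Continuous fun t => ∫ s in t₀..t, f s * exp (-∫ u in s..t, a u) :=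
  continuous_iff_continuousAt.2 fun t =>
    (hasDerivAt_integral_mul_exp_neg_integral ha hf t₀ t).continuousAt

end VariationOfConstants

section Rho

variable {K k : ℕ} {q : ℕ → ℝ → ℝ}

theorem rho_succ_of_eq (hk : k + 1 = K) :
    rho K q (k + 1) = fun t => ∫ s in (0:ℝ)..t, rho K q k s * q k s := by
  funext t
  simp [rho, hk]

theorem rho_succ_of_ne (hk : k + 1 ≠ K) :
    rho K q (k + 1) = fun t =>
      ∫ s in (0:ℝ)..t, rho K q k s * q k s * exp (-∫ u in s..t, q (k + 1) u) := by
  funext t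
  simp [rho, hk]

theorem rho_succ_apply_zero : rho K q (k + 1) 0 = 0 := by
  by_cases hk : k + 1 = K <;> simp [rho, hk]

theorem hasDerivAt_rho_zero (hq : Continuous (q 0)) (t : ℝ) :
    HasDerivAt (rho K q 0) (-q 0 t * rho K q 0 t) t := by
  refine (hq.integral_hasStrictDerivAt 0 t).hasDerivAt.neg.exp.congr_deriv ?_
  exact mul_comm _ _

theorem continuous_rho (hq : ∀ j, j < K → Continuous (q j)) :
    ∀ k, k < K → Continuous (rho K q k)
  | 0, hK => continuous_iff_continuousAt.2 fun t =>
      (hasDerivAt_rho_zero (hq 0 hK) t).continuousAt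
  | k + 1, hk => by
    rw [rho_succ_of_ne hk.ne]
    exact continuous_integral_mul_exp_neg_integral (hq (k + 1) hk)
      ((continuous_rho hq k (by omega)).mul (hq k (by omega))) 0

theorem hasDerivAt_rho_succ_of_lt (hq : ∀ j, j < K → Continuous (q j)) (hk : k + 1 < K)
    (t : ℝ) :
    HasDerivAt (rho K q (k + 1)) (q k t * rho K q k t - q (k + 1) t * rho K q (k + 1) t) t := by
  rw [rho_succ_of_ne hk.ne, mul_comm (q k t)]
  exact hasDerivAt_integral_mul_exp_neg_integral (hq (k + 1) hk)
    ((continuous_rho hq k (by omega)).mul (hq k (by omega))) 0 t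

theorem hasDerivAt_rho_succ_of_eq (hq : ∀ j, j < K → Continuous (q j)) (hk : k + 1 = K)
    (t : ℝ) : HasDerivAt (rho K q (k + 1)) (q k t * rho K q k t) t := by
  rw [rho_succ_of_eq hk, mul_comm]
  exact (((continuous_rho hq k (by omega)).mul (hq k (by omega))).integral_hasStrictDerivAt
    0 t).hasDerivAt

end Rho

/-- The recursively defined `ρ_0, …, ρ_K` solve the Fokker–Planck system
`ρ_0' = -q_0 ρ_0`, `ρ_k' = q_{k-1} ρ_{k-1} - q_k ρ_k` (0 < k < K), `ρ_K' = q_{K-1} ρ_{K-1}`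
for all `t > 0`, with initial data `ρ_0(0) = 1` and `ρ_k(0) = 0` for `k ≥ 1`. -/
theorem rho_solves_fokker_planck (K : ℕ) (hK : 1 ≤ K) (q : ℕ → ℝ → ℝ)
    (hq : ∀ k, k < K → Continuous (q k)) :
    (∀ t : ℝ, 0 < t →
        HasDerivAt (rho K q 0) (-(q 0 t) * rho K q 0 t) t) ∧
    (∀ k : ℕ, 0 < k → k < K → ∀ t : ℝ, 0 < t →
        HasDerivAt (rho K q k)
          (q (k-1) t * rho K q (k-1) t - q k t * rho K q k t) t) ∧
    (∀ t : ℝ, 0 < t →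
        HasDerivAt (rho K q K) (q (K-1) t * rho K q (K-1) t) t) ∧
    rho K q 0 0 = 1 ∧
    (∀ k : ℕ, 1 ≤ k → k ≤ K → rho K q k 0 = 0) := by
  obtain ⟨K, rfl⟩ : ∃ j, K = j + 1 := ⟨K - 1, by omega⟩
  refine ⟨fun t _ => hasDerivAt_rho_zero (hq 0 hK) t, ?_,
    fun t _ => hasDerivAt_rho_succ_of_eq hq rfl t, by simp [rho], ?_⟩
  · rintro (_ | k) hk hkK t -
    · exact absurd hk (lt_irrefl 0)
    · exact hasDerivAt_rho_succ_of_lt hq hkK t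
  · rintro (_ | k) hk -
    · exact absurd hk (by norm_num)
    · exact rho_succ_apply_zero
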